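/- arXiv:1609.01750 — 5 statements merged into one kernel-verified Lean document; each statement's English description precedes it below -/
import Mathlib

section
/- Let T be a nonempty set and ε : T → ℕ a function which, for every t ∈ T, assumes all values in {0, 1, …, ε(t)} (i.e., for each j ≤ ε(t) there exists s ∈ T with ε(s) = j). Then the set Ω := {t ∈ T | ε(t) = 0} is nonempty, and there exists a mapping g : T → T such that Ω is a weak attractor of g and ε(t) = δ(t, Ω, g) for every t ∈ T, where δ(t, Ω, g) is the least k with g^k(t) ∈ Ω. -/
theorem stmt_2 {T : Type*} [Nonempty T] (ε : T → ℕ)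
    (hε : ∀ t : T, ∀ j ≤ ε t, ∃ s : T, ε s = j) :
    {t : T | ε t = 0}.Nonempty ∧
    ∃ g : T → T,
      (∀ t : T, ∃ k : ℕ, g^[k] t ∈ {t : T | ε t = 0}) ∧
      ∀ t : T, ε t = sInf {k : ℕ | g^[k] t ∈ {t : T | ε t = 0}} := by
  have t0 := Classical.arbitrary T
  obtain ⟨s0, hs0⟩ := hε t0 0 (Nat.zero_le _)
  refine ⟨⟨s0, hs0⟩, ?_⟩
  set g : T → T := fun t => if h : ε t = 0 then t else
    Classical.choose (hε t (ε t - 1) (Nat.sub_le _ _)) with hg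
  have hstep : ∀ t, ε (g t) = ε t - 1 := by
    intro t
    by_cases h : ε t = 0
    · simp [hg, h]
    · simp only [hg, dif_neg h]
      exact Classical.choose_spec (hε t (ε t - 1) (Nat.sub_le _ _))
  have hiter : ∀ k t, ε (g^[k] t) = ε t - k := by
    intro k
    induction k with
    | zero => simp
    | succ n ih =>
      intro t
      rw [Function.iterate_succ_apply', hstep, ih]
      omega
  refine ⟨g, fun t => ⟨ε t, by simp [hiter]⟩, fun t => ?_⟩
  have hne : (ε t) ∈ {k : ℕ | g^[k] t ∈ {t : T | ε t = 0}} := by simp [hiter]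
  refine le_antisymm (le_csInf ⟨_, hne⟩ ?_) (Nat.sInf_le hne)
  intro k hk
  have := hiter k t
  simp only [Set.mem_setOf_eq] at hk
  omega
end

section
/- Let T be a finite nonempty set and f : T → T. A subset Ω ⊆ T is a weak attractor of f if and only if Ω intersects every minimal orbit (i.e., every periodic cycle) of the dynamical system (T, f). -/
private lemma iter_mem {T : Type*} {f : T → T} {M : Set T} (hM : f '' M = M)
    {t : T} (ht : t ∈ M) : ∀ k : ℕ, f^[k] t ∈ M := by
  intro k
  induction k with
  | zero => simpa
  | succ n ih =>
    rw [Function.iterate_succ_apply']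
    rw [← hM]
    exact ⟨_, ih, rfl⟩

private lemma exists_min {T : Type*} [Finite T] (f : T → T) :
    ∀ n (S : Set T), S.ncard = n → S.Nonempty → f '' S = S →
      ∃ M, M ⊆ S ∧ M.Nonempty ∧ f '' M = M ∧
        (∀ M' : Set T, M'.Nonempty → f '' M' = M' → M' ⊆ M → M' = M) := by
  intro n
  induction n using Nat.strong_induction_on with
  | _ n ih =>
    intro S hcard hne hinv
    by_cases h : ∀ M' : Set T, M'.Nonempty → f '' M' = M' → M' ⊆ S → M' = S
    · exact ⟨S, subset_rfl, hne, hinv, h⟩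
    · push_neg at h
      obtain ⟨M', hne', hinv', hsub, hneq⟩ := h
      have hlt : M'.ncard < n := by
        rw [← hcard]
        exact Set.ncard_lt_ncard (ssubset_of_subset_of_ne hsub hneq) (Set.toFinite S)
      obtain ⟨M, hMsub, hMne, hMinv, hMmin⟩ := ih M'.ncard hlt M' rfl hne' hinv'
      exact ⟨M, hMsub.trans hsub, hMne, hMinv, hMmin⟩

theorem stmt_3 {T : Type*} [Finite T] [Nonempty T] (f : T → T) (Ω : Set T) :
    (∀ t : T, ∃ k : ℕ, f^[k] t ∈ Ω) ↔
    ∀ M : Set T, M.Nonempty → f '' M = M →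
      (∀ M' : Set T, M'.Nonempty → f '' M' = M' → M' ⊆ M → M' = M) →
      (Ω ∩ M).Nonempty := by
  constructor
  · intro h M hne hinv _
    obtain ⟨t, ht⟩ := hne
    obtain ⟨k, hk⟩ := h t
    exact ⟨f^[k] t, hk, iter_mem hinv ht k⟩
  · intro h t
    -- find i < j with f^[i] t = f^[j] t
    obtain ⟨i, j, hij, heq⟩ : ∃ i j : ℕ, i < j ∧ f^[i] t = f^[j] t := by
      obtain ⟨a, b, hab, heq⟩ := Finite.exists_ne_map_eq_of_infinite (fun n : ℕ => f^[n] t)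
      rcases lt_or_gt_of_ne hab with hlt | hlt
      · exact ⟨a, b, hlt, heq⟩
      · exact ⟨b, a, hlt, heq.symm⟩
    set S : Set T := {x | ∃ n, i ≤ n ∧ f^[n] t = x} with hSdef
    have hSne : S.Nonempty := ⟨f^[i] t, i, le_rfl, rfl⟩
    have hSinv : f '' S = S := by
      ext x
      constructor
      · rintro ⟨y, ⟨n, hn, rfl⟩, rfl⟩
        exact ⟨n + 1, by omega, Function.iterate_succ_apply' f n t⟩
      · rintro ⟨n, hn, rfl⟩
        rcases Nat.lt_or_ge i n with hlt | hge
        · obtain ⟨m, rfl⟩ : ∃ m, n = m + 1 := ⟨n - 1, by omega⟩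
          exact ⟨f^[m] t, ⟨m, by omega, rfl⟩, (Function.iterate_succ_apply' f m t).symm⟩
        · have : n = i := le_antisymm hge hn
          subst this
          obtain ⟨m, rfl⟩ : ∃ m, j = m + 1 := ⟨j - 1, by omega⟩
          exact ⟨f^[m] t, ⟨m, by omega, rfl⟩,
            by rw [← Function.iterate_succ_apply' f m t]; exact heq.symm⟩
    obtain ⟨M, hMsub, hMne, hMinv, hMmin⟩ := exists_min f S.ncard S rfl hSne hSinv
    obtain ⟨x, hxΩ, hxM⟩ := h M hMne hMinv hMmin
    obtain ⟨n, _, rfl⟩ := hMsub hxM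
    exact ⟨n, hxΩ⟩
end

section
/- Let (f, λ, α) be a coupled dynamical system with generated function F, and let a, b ∈ T and j, k ∈ ℕ satisfy: j ≤ δ(a), k ≤ δ(b), j ≤ k, and f^j(a) = f^k(b). Then F(b) = λ^{k−j}(F(a)). -/
theorem stmt_5 {T Y : Type*} [Nonempty T] [Nonempty Y]
    (f : T → T) (Ω : Set T) (hΩ : ∀ t : T, ∃ k : ℕ, f^[k] t ∈ Ω)
    (lam : Y → Y) (α : T → Y)
    (δ : T → ℕ) (hδ : ∀ t, δ t = sInf {k : ℕ | f^[k] t ∈ Ω})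
    (F : T → Y) (hF : ∀ t, F t = lam^[δ t] (α (f^[δ t] t)))
    (a b : T) (j k : ℕ)
    (hj : j ≤ δ a) (hk : k ≤ δ b) (hjk : j ≤ k)
    (h : f^[j] a = f^[k] b) :
    F b = lam^[k - j] (F a) := by
  have hmem : ∀ t : T, f^[δ t] t ∈ Ω := by
    intro t
    rw [hδ t]
    exact Nat.sInf_mem (hΩ t)
  have key : ∀ (t : T) (m : ℕ), m ≤ δ t → δ (f^[m] t) = δ t - m := by
    intro t m hm
    rw [hδ (f^[m] t)]
    apply le_antisymm
    · apply Nat.sInf_le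
      show f^[δ t - m] (f^[m] t) ∈ Ω
      rw [← Function.iterate_add_apply, Nat.sub_add_cancel hm]
      exact hmem t
    · apply le_csInf ⟨δ t - m, by
        show f^[δ t - m] (f^[m] t) ∈ Ω
        rw [← Function.iterate_add_apply, Nat.sub_add_cancel hm]
        exact hmem t⟩
      intro n hn
      have : f^[n + m] t ∈ Ω := by
        rw [Function.iterate_add_apply]; exact hn
      have h2 : δ t ≤ n + m := by
        rw [hδ t]; exact Nat.sInf_le this
      omega
  have hka : δ (f^[j] a) = δ a - j := key a j hj
  have hkb : δ (f^[k] b) = δ b - k := key b k hk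
  have heq : δ a - j = δ b - k := by rw [← hka, h, hkb]
  have hδab : δ b = δ a - j + k := by omega
  have hiter : f^[δ b] b = f^[δ a] a := by
    rw [hδab, Function.iterate_add_apply, ← h, ← Function.iterate_add_apply,
      Nat.sub_add_cancel hj]
  rw [hF a, hF b, hiter, hδab, ← Function.iterate_add_apply]
  congr 1
  omega
end

section
/- Define f : ℕ × ℕ → ℕ × ℕ by f(a, 0) = (a, a), f(0, b) = (b, b), and f(a, b) = (|a − b|, (a + b) div 2) if a, b ≥ 1. Then the diagonal Ω = {(n, n) | n ∈ ℕ} is a weak attractor of f: for every (a, b) ∈ ℕ × ℕ there exists k with f^k(a, b) ∈ Ω. -/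
theorem stmt_10 (f : ℕ × ℕ → ℕ × ℕ)
    (hf0 : ∀ a : ℕ, f (a, 0) = (a, a))
    (hf0' : ∀ b : ℕ, f (0, b) = (b, b))
    (hf : ∀ a b : ℕ, 1 ≤ a → 1 ≤ b → f (a, b) = (Nat.dist a b, (a + b) / 2)) :
    ∀ p : ℕ × ℕ, ∃ k : ℕ, f^[k] p ∈ {q : ℕ × ℕ | q.1 = q.2} := by
  have main : ∀ n : ℕ, ∀ p : ℕ × ℕ, max p.1 p.2 ≤ n →
      ∃ k : ℕ, f^[k] p ∈ {q : ℕ × ℕ | q.1 = q.2} := by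
    intro n
    induction n with
    | zero =>
      intro p hp
      have h1 : p.1 = 0 := by omega
      have h2 : p.2 = 0 := by omega
      exact ⟨0, by simp [Set.mem_setOf_eq, h1, h2]⟩
    | succ n ih =>
      intro ⟨a, b⟩ hp
      simp only at hp
      by_cases hab : a = b
      · exact ⟨0, by simpa using hab⟩
      rcases Nat.eq_zero_or_pos a with ha | ha
      · exact ⟨1, by simp [ha, hf0' b]⟩
      rcases Nat.eq_zero_or_pos b with hb | hb
      · exact ⟨1, by simp [hb, hf0 a]⟩
      have hstep : f (a, b) = (Nat.dist a b, (a + b) / 2) := hf a b ha hb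
      have hdist : Nat.dist a b = (a - b) + (b - a) := rfl
      have hbound : max (Nat.dist a b) ((a + b) / 2) ≤ n := by omega
      obtain ⟨k, hk⟩ := ih (Nat.dist a b, (a + b) / 2) hbound
      exact ⟨k + 1, by rwa [Function.iterate_succ_apply, hstep]⟩
  intro p
  exact main (max p.1 p.2) p le_rfl
end

section
/- Define f : ℕ → ℕ by f(n) = n + 1 if n is even and f(n) = n div 2 if n is odd, let δ(n) be the least k with f^k(n) = 0, and set F(n) := δ(n) mod 2. Then F satisfies the Thue–Morse recursion: F(0) = 0, F(2n) = F(n) for all n, and F(2n+1) = 1 − F(n) for all n. -/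
theorem stmt_12 (f : ℕ → ℕ)
    (hf : ∀ n : ℕ, f n = if Even n then n + 1 else n / 2)
    (δ : ℕ → ℕ) (hδ : ∀ n, δ n = sInf {k : ℕ | f^[k] n = 0})
    (F : ℕ → ℕ) (hF : ∀ n, F n = δ n % 2) :
    F 0 = 0 ∧ (∀ n : ℕ, F (2 * n) = F n) ∧ ∀ n : ℕ, F (2 * n + 1) = 1 - F n := by
  have hfo : ∀ n : ℕ, f (2 * n + 1) = n := by
    intro n
    rw [hf]
    have : ¬ Even (2 * n + 1) := by simp [Nat.even_add_one, Nat.even_mul]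
    simp [this]
    omega
  have hfe : ∀ n : ℕ, f (2 * n) = 2 * n + 1 := by
    intro n
    rw [hf]
    simp [Nat.even_mul]
  -- termination
  have hterm : ∀ n : ℕ, ∃ k, f^[k] n = 0 := by
    intro n
    induction n using Nat.strong_induction_on with
    | _ n ih =>
      rcases Nat.eq_zero_or_pos n with h0 | hpos
      · exact ⟨0, by simp [h0]⟩
      rcases Nat.even_or_odd n with ⟨m, hm⟩ | ⟨m, hm⟩
      · -- n = 2m, m > 0
        have hm' : n = 2 * m := by omega
        obtain ⟨k, hk⟩ := ih m (by omega)
        refine ⟨k + 2, ?_⟩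
        have h2 : f^[2] n = m := by
          show f (f n) = m
          rw [hm', hfe, hfo]
        rw [Function.iterate_add_apply, h2, hk]
      · obtain ⟨k, hk⟩ := ih m (by omega)
        exact ⟨k + 1, by
          rw [Function.iterate_add_apply]
          simp [hm, hfo, hk]⟩
  have hne : ∀ n : ℕ, {k : ℕ | f^[k] n = 0}.Nonempty := fun n => hterm n
  have hmem : ∀ n : ℕ, f^[δ n] n = 0 := by
    intro n
    rw [hδ]
    exact Nat.sInf_mem (hne n)
  have hrec : ∀ m : ℕ, m ≠ 0 → δ m = δ (f m) + 1 := by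
    intro m hm
    apply le_antisymm
    · rw [hδ m]
      apply Nat.sInf_le
      show f^[δ (f m) + 1] m = 0
      rw [Function.iterate_succ_apply]
      exact hmem (f m)
    · rw [hδ m]
      apply le_csInf (hne m)
      intro k hk
      have hk0 : k ≠ 0 := by
        rintro rfl
        exact hm hk
      obtain ⟨j, rfl⟩ := Nat.exists_eq_succ_of_ne_zero hk0
      have : f^[j] (f m) = 0 := by
        rwa [← Function.iterate_succ_apply]
      have : δ (f m) ≤ j := by
        rw [hδ]
        exact Nat.sInf_le this
      omega
  have hδ0 : δ 0 = 0 := by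
    rw [hδ]
    simp [Nat.sInf_eq_zero]
  have hδodd : ∀ n : ℕ, δ (2 * n + 1) = δ n + 1 := by
    intro n
    rw [hrec _ (by omega), hfo]
  have hδeven : ∀ n : ℕ, 0 < n → δ (2 * n) = δ n + 2 := by
    intro n hn
    rw [hrec _ (by omega), hfe, hδodd]
  refine ⟨by rw [hF, hδ0], ?_, ?_⟩
  · intro n
    rcases Nat.eq_zero_or_pos n with rfl | hn
    · simp
    · rw [hF, hF, hδeven n hn]; omega
  · intro n
    rw [hF, hF, hδodd]
    omega
end
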